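/- arXiv:2404.03559 — 5 statements merged into one kernel-verified Lean document; each statement's English description precedes it below -/
import Mathlib

section
/- For any s ≥ 1, t > 1, δ > 0 and points x, y, the gap satisfies f̃_{t+s,δ}(x,y) ≤ f̃_{t,δ}(x,y) + s/t. -/
open MeasureTheory Filter Set Topology
open scoped ENNReal symmDiff

section FK

structure IsFlow {X : Type*} [TopologicalSpace X] (Φ : ℝ → X → X) : Prop where
  cont : Continuous fun p : ℝ × X => Φ p.1 p.2
  map_zero : ∀ x, Φ 0 x = x
  map_add : ∀ t s x, Φ (t + s) x = Φ s (Φ t x)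

variable {X : Type*} [MetricSpace X]

/-- `x` and `y` are `(t,ε,δ)`-matchable: there are measurable `A, A' ⊆ [0,t]` of Lebesgue
measure `> (1-ε)t` and an increasing absolutely continuous onto map `h : A → A'`
(with a.e. derivative `h'`) with `|h' - 1| < ε` and `d(φ^s x, φ^{h s} y) < δ` on `A`. -/
def Matchable (Φ : ℝ → X → X) (x y : X) (t ε δ : ℝ) : Prop :=
  ∃ (A A' : Set ℝ) (h h' : ℝ → ℝ),
    MeasurableSet A ∧ MeasurableSet A' ∧
    A ⊆ Icc 0 t ∧ A' ⊆ Icc 0 t ∧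
    ENNReal.ofReal ((1 - ε) * t) < volume A ∧
    ENNReal.ofReal ((1 - ε) * t) < volume A' ∧
    MapsTo h A A' ∧ SurjOn h A A' ∧ StrictMonoOn h A ∧
    (∀ B ⊆ A, MeasurableSet B → volume (h '' B) = ENNReal.ofReal (∫ s in B, h' s)) ∧
    (∀ s ∈ A, |h' s - 1| < ε) ∧
    (∀ s ∈ A, dist (Φ s x) (Φ (h s) y) < δ)

/-- The `(t,δ)`-gap `f̃_{t,δ}(x,y)`; by convention it equals `1` when no matching exists. -/
noncomputable def fkGap (Φ : ℝ → X → X) (t δ : ℝ) (x y : X) : ℝ :=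
  sInf ({ε : ℝ | 0 < ε ∧ Matchable Φ x y t ε δ} ∪ {1})

/-- `f̃_δ(x,y) = limsup_{t → ∞} f̃_{t,δ}(x,y)`. -/
noncomputable def fkDist (Φ : ℝ → X → X) (δ : ℝ) (x y : X) : ℝ :=
  Filter.limsup (fun t => fkGap Φ t δ x y) Filter.atTop

/-- The Feldman–Katok pseudometric for flows. -/
noncomputable def rhoFK (Φ : ℝ → X → X) (x y : X) : ℝ :=
  sInf {δ : ℝ | 0 < δ ∧ fkDist Φ δ x y < δ}

/-- Discrete `(n,δ)`-matching of cardinality `k` for a map `T`. -/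
def DMatching (T : X → X) (x y : X) (n : ℕ) (δ : ℝ) (k : ℕ) : Prop :=
  ∃ (D D' : Finset ℕ) (π : ℕ → ℕ),
    D ⊆ Finset.range n ∧ D' ⊆ Finset.range n ∧ D.card = k ∧
    Set.BijOn π ↑D ↑D' ∧ StrictMonoOn π ↑D ∧
    ∀ i ∈ D, dist (T^[i] x) (T^[π i] y) < δ

/-- The discrete `(n,δ)`-gap `f̄_{n,δ}(x,y)`. -/
noncomputable def dGap (T : X → X) (n : ℕ) (δ : ℝ) (x y : X) : ℝ :=
  1 - ((sSup {k : ℕ | DMatching T x y n δ k} : ℕ) : ℝ) / n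

/-- `f̄_δ(x,y) = limsup_{n → ∞} f̄_{n,δ}(x,y)`. -/
noncomputable def dFKdist (T : X → X) (δ : ℝ) (x y : X) : ℝ :=
  Filter.limsup (fun n : ℕ => dGap T n δ x y) Filter.atTop

/-- The discrete Feldman–Katok pseudometric. -/
noncomputable def dRhoFK (T : X → X) (x y : X) : ℝ :=
  sInf {δ : ℝ | 0 < δ ∧ dFKdist T δ x y ≤ δ}

variable [MeasurableSpace X] [BorelSpace X]

/-- The `t`-empirical measure `μ_{x,t} = (1/t) ∫_0^t δ_{φ^s x} ds`. -/
noncomputable def empMeasure (Φ : ℝ → X → X) (x : X) (t : ℝ) : Measure X :=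
  (ENNReal.ofReal (1 / t)) • Measure.map (fun s => Φ s x) (volume.restrict (Icc 0 t))

/-- `x` is generic for `μ`: empirical measures converge to `μ` in the weak* topology. -/
def Generic (Φ : ℝ → X → X) (μ : Measure X) (x : X) : Prop :=
  ∀ f : C(X, ℝ), Tendsto (fun t => ∫ z, f z ∂(empMeasure Φ x t)) atTop (𝓝 (∫ z, f z ∂μ))

def FlowInvariant (Φ : ℝ → X → X) (μ : Measure X) : Prop :=
  ∀ t : ℝ, MeasurePreserving (Φ t) μ μ

def FlowErgodic (Φ : ℝ → X → X) (μ : Measure X) : Prop :=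
  FlowInvariant Φ μ ∧
    ∀ A : Set X, MeasurableSet A → (∀ t, Φ t ⁻¹' A = A) → μ A = 0 ∨ μ A = 1

/-- The Prokhorov metric. -/
noncomputable def prokhorov (μ ν : Measure X) : ℝ :=
  sInf {ε : ℝ | 0 < ε ∧ ∀ B : Set X, MeasurableSet B →
    μ B ≤ ν (Metric.thickening ε B) + ENNReal.ofReal ε}

/-- A finite Borel partition of `X`, indexed by `ℕ` with all but finitely many cells empty. -/
structure BPartition (X : Type*) [MeasurableSpace X] where
  cells : ℕ → Set X
  measurable : ∀ j, MeasurableSet (cells j)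
  disj : Pairwise (Function.onFun Disjoint cells)
  cover : ⋃ j, cells j = Set.univ
  finite : ∃ n, ∀ j, n ≤ j → cells j = ∅

/-- The partition pseudometric `d_μ(P,Q)` (infimum over orderings of
`μ {x : P(x) ≠ Q(x)}`). -/
noncomputable def dPart (μ : Measure X) (P Q : ℕ → Set X) : ℝ :=
  ⨅ σ : Equiv.Perm ℕ, (μ (⋃ j, P j \ Q (σ j))).toReal

/-- `(t,ε,P)`-matchability with respect to a partition `P` (Ratner). -/
def PMatchable (Φ : ℝ → X → X) (P : ℕ → Set X) (x y : X) (t ε : ℝ) : Prop :=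
  ∃ (A A' : Set ℝ) (h h' : ℝ → ℝ),
    MeasurableSet A ∧ MeasurableSet A' ∧
    A ⊆ Icc 0 t ∧ A' ⊆ Icc 0 t ∧
    ENNReal.ofReal ((1 - ε) * t) < volume A ∧
    ENNReal.ofReal ((1 - ε) * t) < volume A' ∧
    MapsTo h A A' ∧ SurjOn h A A' ∧ StrictMonoOn h A ∧
    (∀ B ⊆ A, MeasurableSet B → volume (h '' B) = ENNReal.ofReal (∫ s in B, h' s)) ∧
    (∀ s ∈ A, |h' s - 1| < ε) ∧
    (∀ s ∈ A, ∀ j, Φ s x ∈ P j ↔ Φ (h s) y ∈ P j)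

/-- `f_t(x,y,P)`. -/
noncomputable def fPart (Φ : ℝ → X → X) (P : ℕ → Set X) (t : ℝ) (x y : X) : ℝ :=
  sInf ({ε : ℝ | 0 < ε ∧ PMatchable Φ P x y t ε} ∪ {1})

/-- The `(t,P)`-ball of radius `ε` centered at `x`. -/
def PBall (Φ : ℝ → X → X) (P : ℕ → Set X) (t ε : ℝ) (x : X) : Set X :=
  {y | fPart Φ P t x y < ε}

/-- `K_t(ε,P)`: minimal cardinality of an `(ε,t,P)`-cover (`⊤` if none exists). -/
noncomputable def Kt (μ : Measure X) (Φ : ℝ → X → X) (P : ℕ → Set X) (ε t : ℝ) : ℝ≥0∞ :=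
  sInf ((fun C : Finset X => (C.card : ℝ≥0∞)) ''
    {C : Finset X | ENNReal.ofReal (1 - ε) < μ (⋃ x ∈ C, PBall Φ P t ε x)})

/-- `β(u,ε,P) = liminf_{t→∞} log K_t(ε,P) / u(t)`. -/
noncomputable def betaU (μ : Measure X) (Φ : ℝ → X → X) (P : ℕ → Set X) (u : ℝ → ℝ)
    (ε : ℝ) : EReal :=
  Filter.liminf (fun t => ENNReal.log (Kt μ Φ P ε t) / (ENNReal.ofReal (u t) : EReal))
    Filter.atTop

/-- `e(u,P) = limsup_{ε→0⁺} β(u,ε,P)`. -/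
noncomputable def eUP (μ : Measure X) (Φ : ℝ → X → X) (P : ℕ → Set X) (u : ℝ → ℝ) : EReal :=
  Filter.limsup (fun ε => betaU μ Φ P u ε) (𝓝[>] (0 : ℝ))

/-- `e(Φ,u) = sup_P e(u,P)`. -/
noncomputable def ePhi (μ : Measure X) (Φ : ℝ → X → X) (u : ℝ → ℝ) : EReal :=
  ⨆ P : BPartition X, eUP μ Φ P.cells u

end FK


lemma matchable_ext {X : Type*} [MetricSpace X] (Φ : ℝ → X → X) (x y : X)
    (t s δ ε : ℝ) (hε : 0 ≤ ε) (hs : 0 ≤ s) (ht : 0 < t)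
    (hM : Matchable Φ x y t ε δ) : Matchable Φ x y (t + s) (ε + s / t) δ := by
  obtain ⟨A, A', h, h', mA, mA', hAt, hA't, vA, vA', hm, hsur, hmono, hac, hder, hd⟩ := hM
  have hd0 : 0 ≤ s / t := div_nonneg hs ht.le
  have hdt : s / t * t = s := div_mul_cancel₀ s ht.ne'
  have hle : (1 - (ε + s / t)) * (t + s) ≤ (1 - ε) * t := by nlinarith [mul_nonneg hε hs]
  refine ⟨A, A', h, h', mA, mA', hAt.trans (Icc_subset_Icc_right (by linarith)),
    hA't.trans (Icc_subset_Icc_right (by linarith)),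
    lt_of_le_of_lt (ENNReal.ofReal_le_ofReal hle) vA,
    lt_of_le_of_lt (ENNReal.ofReal_le_ofReal hle) vA',
    hm, hsur, hmono, hac, fun u hu => (hder u hu).trans_le (le_add_of_nonneg_right hd0), hd⟩

theorem stmt1 {X : Type*} [MetricSpace X] [CompactSpace X] (Φ : ℝ → X → X) (hΦ : IsFlow Φ) (x y : X)
    (t s δ : ℝ) (hs : 1 ≤ s) (ht : 1 < t) (hδ : 0 < δ) :
    fkGap Φ (t + s) δ x y ≤ fkGap Φ t δ x y + s / t := by
  have hst : 0 < s / t := div_pos (by linarith) (by linarith)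
  have hbdd : ∀ r : ℝ, BddBelow ({ε : ℝ | 0 < ε ∧ Matchable Φ x y r ε δ} ∪ {1}) := by
    intro r
    refine ⟨0, fun e he => ?_⟩
    rcases he with he | he
    · exact he.1.le
    · rw [mem_singleton_iff] at he; linarith
  have key : ∀ ε ∈ ({ε : ℝ | 0 < ε ∧ Matchable Φ x y t ε δ} ∪ {1}),
      fkGap Φ (t + s) δ x y ≤ ε + s / t := by
    intro ε hε
    rcases hε with ⟨hε0, hεm⟩ | hε1
    · exact csInf_le (hbdd _) (Or.inl ⟨by linarith,
        matchable_ext Φ x y t s δ ε hε0.le (by linarith) (by linarith) hεm⟩)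
    · rw [mem_singleton_iff] at hε1
      subst hε1
      have h1 : fkGap Φ (t + s) δ x y ≤ 1 := csInf_le (hbdd _) (Or.inr rfl)
      linarith
  have hfin : fkGap Φ (t + s) δ x y - s / t ≤ fkGap Φ t δ x y := by
    conv_rhs => rw [fkGap]
    exact le_csInf ⟨1, Or.inr rfl⟩ fun b hb => by linarith [key b hb]
  linarith
end

section
/- If f̃_{t,δ}(x,y) < ε, then the Prokhorov distance between the t-empirical measures of x and y satisfies D_P(μ_{x,t}, μ_{y,t}) < max{δ, 2ε}. -/
open MeasureTheory Filter Set Topology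
open scoped ENNReal symmDiff

/-!
A `(t,δ)`-matching `h : A → A'` with `|h' - 1| < ε` and `λ(A) > (1-ε)t` transports `μ_{x,t}` onto
`μ_{y,t}` up to mass `2ε`: the part of `[0,t]` outside `A` has length `< εt`, and `h` shrinks the
length of any `B ⊆ A` by a factor at least `1 - ε`. Since `φ^{h s} y` is `δ`-close to `φ^s x`, times
at which the orbit of `x` visits a set `B` are sent to times at which the orbit of `y` visits the
`δ`-thickening of `B`. To get a radius strictly below `max δ (2ε)`, shrink `A` slightly so that the
distances stay below some `δ' < δ`; this set is measurable because the increasing map `h` extends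
to a monotone function on `ℝ`.
-/

lemma exists_lt_of_fkGap_lt {X : Type*} [MetricSpace X] {Φ : ℝ → X → X} {x y : X} {t δ ε : ℝ}
    (h : fkGap Φ t δ x y < ε) :
    ∃ ε' < ε, ε' = 1 ∨ 0 < ε' ∧ Matchable Φ x y t ε' δ := by
  have hbdd : BddBelow ({ε' | 0 < ε' ∧ Matchable Φ x y t ε' δ} ∪ {1}) :=
    ⟨0, fun _ h' => h'.elim (fun h' => h'.1.le) fun h' => h'.symm ▸ zero_le_one⟩
  obtain ⟨ε', hε', hlt⟩ := (csInf_lt_iff hbdd ⟨1, Or.inr rfl⟩).1 h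
  exact ⟨ε', hlt, hε'.symm⟩

lemma IsFlow.continuous_orbit {X : Type*} [TopologicalSpace X] {Φ : ℝ → X → X} (hΦ : IsFlow Φ)
    (x : X) : Continuous fun s => Φ s x :=
  hΦ.cont.comp (continuous_id.prodMk continuous_const)

section Prokhorov

variable {X : Type*} [MetricSpace X] [MeasurableSpace X] {μ ν : Measure X} {ε : ℝ}

lemma prokhorov_le_of_forall (hε : 0 < ε)
    (h : ∀ B, MeasurableSet B → μ B ≤ ν (Metric.thickening ε B) + ENNReal.ofReal ε) :
    prokhorov μ ν ≤ ε :=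
  csInf_le ⟨0, fun _ hε' => hε'.1.le⟩ ⟨hε, h⟩

lemma prokhorov_le_of_one_le (hμ : μ univ ≤ 1) (hε : 1 ≤ ε) : prokhorov μ ν ≤ ε :=
  prokhorov_le_of_forall (by linarith) fun B _ =>
    calc μ B ≤ μ univ := measure_mono (subset_univ B)
      _ ≤ ENNReal.ofReal ε := hμ.trans (by simpa using ENNReal.ofReal_le_ofReal hε)
      _ ≤ _ := le_add_self

end Prokhorov

lemma exists_lt_lt_measure_setOf_lt {α : Type*} [MeasurableSpace α] {μ : Measure α} {A : Set α}
    {f : α → ℝ} {δ : ℝ} {r : ℝ≥0∞} (hf : ∀ s ∈ A, f s < δ) (hr : r < μ A) :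
    ∃ δ' < δ, r < μ {s ∈ A | f s < δ'} := by
  set S : ℕ → Set α := fun n => {s ∈ A | f s < δ - 1 / (n + 1)}
  have hS : Monotone S := fun n k hnk s hs => ⟨hs.1, hs.2.trans_le (by gcongr)⟩
  have hA : ⋃ n, S n = A := by
    refine Subset.antisymm (iUnion_subset fun n => sep_subset _ _) fun s hs => ?_
    obtain ⟨n, hn⟩ := exists_nat_one_div_lt (sub_pos.2 (hf s hs))
    exact mem_iUnion.2 ⟨n, hs, by linarith⟩
  rw [← hA, hS.measure_iUnion, lt_iSup_iff] at hr
  obtain ⟨n, hn⟩ := hr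
  exact ⟨δ - 1 / (n + 1), sub_lt_self δ Nat.one_div_pos_of_nat, hn⟩

section Reparametrization

variable {A : Set ℝ} {m m' : ℝ → ℝ}

lemma integrableOn_of_volume_image_ne_zero
    (hform : volume (m '' A) = ENNReal.ofReal (∫ s in A, m' s)) (hA : volume (m '' A) ≠ 0) :
    IntegrableOn m' A := by
  by_contra hint
  rw [integral_undef hint, ENNReal.ofReal_zero] at hform
  exact hA hform

lemma ofReal_mul_volume_le_volume_image {c : ℝ}
    (hform : ∀ B ⊆ A, MeasurableSet B → volume (m '' B) = ENNReal.ofReal (∫ s in B, m' s))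
    (hm' : ∀ s ∈ A, c ≤ m' s) (hint : IntegrableOn m' A) {B : Set ℝ} (hBA : B ⊆ A)
    (hB : MeasurableSet B) (hBfin : volume B ≠ ∞) :
    ENNReal.ofReal (c * volume.real B) ≤ volume (m '' B) := by
  rw [hform B hBA hB]
  exact ENNReal.ofReal_le_ofReal <|
    setIntegral_ge_of_const_le_real hB hBfin (fun s hs => hm' s (hBA hs)) (hint.mono_set hBA)

lemma volume_inter_Icc_le_volume_image_add {t ε : ℝ} {P : Set ℝ} (hε : 0 ≤ ε) (ht : 0 ≤ t)
    (hA : MeasurableSet A) (hAt : A ⊆ Icc 0 t) (hAvol : ENNReal.ofReal ((1 - ε) * t) ≤ volume A)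
    (himage : ∀ B ⊆ A, MeasurableSet B → ENNReal.ofReal ((1 - ε) * volume.real B) ≤ volume (m '' B))
    (hP : MeasurableSet P) :
    volume (P ∩ Icc 0 t) ≤ volume (m '' (A ∩ P)) + ENNReal.ofReal (2 * ε * t) := by
  have hIcc : volume (Icc 0 t) ≠ ∞ := measure_Icc_lt_top.ne
  have hout : volume (Icc 0 t \ A) ≤ ENNReal.ofReal (ε * t) := by
    rw [measure_sdiff hAt hA.nullMeasurableSet (measure_ne_top_of_subset hAt hIcc),
      tsub_le_iff_right, Real.volume_Icc]
    calc ENNReal.ofReal (t - 0) = ENNReal.ofReal (ε * t + (1 - ε) * t) := by ring_nf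
      _ ≤ _ := ENNReal.ofReal_add_le.trans (by gcongr)
  have hin : volume (A ∩ P) ≤ volume (m '' (A ∩ P)) + ENNReal.ofReal (ε * t) := by
    have hAP : A ∩ P ⊆ Icc 0 t := inter_subset_left.trans hAt
    have hle : volume.real (A ∩ P) ≤ t := by
      simpa [ht] using measureReal_mono hAP hIcc
    calc volume (A ∩ P) = ENNReal.ofReal (volume.real (A ∩ P)) :=
          (ENNReal.ofReal_toReal (measure_ne_top_of_subset hAP hIcc)).symm
      _ ≤ ENNReal.ofReal ((1 - ε) * volume.real (A ∩ P) + ε * t) :=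
          ENNReal.ofReal_le_ofReal (by nlinarith)
      _ ≤ _ := ENNReal.ofReal_add_le.trans
          (by gcongr; exact himage _ inter_subset_left (hA.inter hP))
  calc volume (P ∩ Icc 0 t) ≤ volume (A ∩ P ∪ Icc 0 t \ A) :=
        measure_mono fun s hs => (em (s ∈ A)).imp (fun h => ⟨h, hs.1⟩) fun h => ⟨hs.2, h⟩
    _ ≤ volume (m '' (A ∩ P)) + ENNReal.ofReal (ε * t) + ENNReal.ofReal (ε * t) :=
        (measure_union_le _ _).trans (add_le_add hin hout)
    _ = _ := by
        rw [add_assoc, ← ENNReal.ofReal_add (by positivity) (by positivity)]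
        ring_nf

end Reparametrization

section Empirical

variable {X : Type*} [MeasurableSpace X] {Φ : ℝ → X → X} {x y : X} {t : ℝ}

lemma empMeasure_apply (hx : Measurable fun s => Φ s x) {B : Set X} (hB : MeasurableSet B) :
    empMeasure Φ x t B = ENNReal.ofReal (1 / t) * volume ((fun s => Φ s x) ⁻¹' B ∩ Icc 0 t) := by
  rw [empMeasure, Measure.smul_apply, smul_eq_mul, Measure.map_apply hx hB,
    Measure.restrict_apply (hx hB)]

lemma empMeasure_univ (hx : Measurable fun s => Φ s x) (ht : 0 < t) :
    empMeasure Φ x t univ = 1 := by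
  rw [empMeasure_apply hx MeasurableSet.univ, preimage_univ, univ_inter, Real.volume_Icc,
    sub_zero, ← ENNReal.ofReal_mul (by positivity), one_div_mul_cancel ht.ne', ENNReal.ofReal_one]

lemma empMeasure_le_add_of_volume_le (hx : Measurable fun s => Φ s x)
    (hy : Measurable fun s => Φ s y) (ht : 0 < t) {B B' : Set X} (hB : MeasurableSet B)
    (hB' : MeasurableSet B') {c : ℝ}
    (h : volume ((fun s => Φ s x) ⁻¹' B ∩ Icc 0 t)
      ≤ volume ((fun s => Φ s y) ⁻¹' B' ∩ Icc 0 t) + ENNReal.ofReal (c * t)) :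
    empMeasure Φ x t B ≤ empMeasure Φ y t B' + ENNReal.ofReal c := by
  rw [empMeasure_apply hx hB, empMeasure_apply hy hB']
  calc _ ≤ ENNReal.ofReal (1 / t) *
        (volume ((fun s => Φ s y) ⁻¹' B' ∩ Icc 0 t) + ENNReal.ofReal (c * t)) := by
        gcongr
    _ = _ := by
        rw [mul_add, ← ENNReal.ofReal_mul (by positivity)]
        congr 2
        field_simp

end Empirical

section Transport

variable {X : Type*} [MetricSpace X] [MeasurableSpace X] [BorelSpace X] {Φ : ℝ → X → X} {x y : X}
  {t ε δ : ℝ}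

lemma prokhorov_empMeasure_le_of_transport (hx : Continuous fun s => Φ s x)
    (hy : Continuous fun s => Φ s y) (ht : 0 < t) (hε : 0 < ε) {A : Set ℝ} {m : ℝ → ℝ}
    (hA : MeasurableSet A) (hAt : A ⊆ Icc 0 t) (hAvol : ENNReal.ofReal ((1 - ε) * t) ≤ volume A)
    (hmaps : MapsTo m A (Icc 0 t))
    (himage : ∀ B ⊆ A, MeasurableSet B → ENNReal.ofReal ((1 - ε) * volume.real B) ≤ volume (m '' B))
    (hdist : ∀ s ∈ A, dist (Φ s x) (Φ (m s) y) < δ) :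
    prokhorov (empMeasure Φ x t) (empMeasure Φ y t) ≤ max δ (2 * ε) := by
  refine prokhorov_le_of_forall (lt_max_of_lt_right (by linarith)) fun B hB => ?_
  refine empMeasure_le_add_of_volume_le hx.measurable hy.measurable ht hB
    Metric.isOpen_thickening.measurableSet ?_
  calc _ ≤ volume (m '' (A ∩ (fun s => Φ s x) ⁻¹' B)) + ENNReal.ofReal (2 * ε * t) :=
        volume_inter_Icc_le_volume_image_add hε.le ht.le hA hAt hAvol himage (hx.measurable hB)
    _ ≤ _ := by
        gcongr
        · rintro _ ⟨s, ⟨hsA, hsB⟩, rfl⟩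
          refine ⟨Metric.mem_thickening_iff.2 ⟨_, hsB, ?_⟩, hmaps hsA⟩
          rw [dist_comm]
          exact (hdist s hsA).trans_le (le_max_left _ _)
        · exact le_max_right _ _

lemma Matchable.exists_prokhorov_empMeasure_le (hΦ : IsFlow Φ) (hM : Matchable Φ x y t ε δ)
    (ht : 0 < t) (hε : 0 < ε) :
    ∃ δ' < δ, prokhorov (empMeasure Φ x t) (empMeasure Φ y t) ≤ max δ' (2 * ε) := by
  obtain ⟨A, A', m, m', hA, -, hAt, hA't, hAvol, hA'vol, hmaps, hsurj, hmono, hform, hder,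
    hdist⟩ := hM
  have hint : IntegrableOn m' A := by
    refine integrableOn_of_volume_image_ne_zero (hform A subset_rfl hA) fun h0 => ?_
    exact (zero_le.trans_lt hA'vol).ne' (measure_mono_null hsurj h0)
  have himage : ∀ B ⊆ A, MeasurableSet B →
      ENNReal.ofReal ((1 - ε) * volume.real B) ≤ volume (m '' B) := fun B hBA hB =>
    ofReal_mul_volume_le_volume_image hform (fun s hs => by linarith [(abs_lt.1 (hder s hs)).1])
      hint hBA hB (measure_ne_top_of_subset (hBA.trans hAt) measure_Icc_lt_top.ne)
  obtain ⟨g, hg, hmg⟩ := hmono.monotoneOn.exists_monotone_extension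
    ⟨0, forall_mem_image.2 fun s hs => (hA't (hmaps hs)).1⟩
    ⟨t, forall_mem_image.2 fun s hs => (hA't (hmaps hs)).2⟩
  have hD : Measurable fun s => dist (Φ s x) (Φ (g s) y) :=
    (((hΦ.continuous_orbit x).comp continuous_fst).dist
      ((hΦ.continuous_orbit y).comp continuous_snd)).measurable.comp
      (measurable_id.prodMk hg.measurable)
  obtain ⟨δ', hδ', hvol⟩ := exists_lt_lt_measure_setOf_lt
    (f := fun s => dist (Φ s x) (Φ (g s) y)) (fun s hs => hmg hs ▸ hdist s hs) hAvol
  refine ⟨δ', hδ', prokhorov_empMeasure_le_of_transport (hΦ.continuous_orbit x)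
    (hΦ.continuous_orbit y) ht hε (hA.inter (measurableSet_lt hD measurable_const))
    ((sep_subset _ _).trans hAt) hvol.le (hmaps.mono_left (sep_subset _ _) |>.mono_right hA't)
    (fun B hB => himage B (hB.trans (sep_subset _ _))) fun s hs => ?_⟩
  simpa only [hmg hs.1, mem_ofPred_eq] using hs.2

end Transport

theorem stmt2_general {X : Type*} [MetricSpace X] [MeasurableSpace X] [BorelSpace X] (Φ : ℝ → X → X) (hΦ : IsFlow Φ) (x y : X)
    (t δ ε : ℝ) (ht : 1 < t)
    (h : fkGap Φ t δ x y < ε) :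
    prokhorov (empMeasure Φ x t) (empMeasure Φ y t) < max δ (2 * ε) := by
  have ht₀ : 0 < t := by linarith
  obtain ⟨ε', hε'ε, hε'⟩ := exists_lt_of_fkGap_lt h
  have h2ε' : 2 * ε' < max δ (2 * ε) := lt_max_of_lt_right (by linarith)
  rcases hε' with rfl | ⟨hε'₀, hM⟩
  · exact (prokhorov_le_of_one_le (empMeasure_univ (hΦ.continuous_orbit x).measurable ht₀).le
      one_le_two).trans_lt (by simpa using h2ε')
  obtain ⟨δ', hδ', hP⟩ := hM.exists_prokhorov_empMeasure_le hΦ ht₀ hε'₀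
  exact hP.trans_lt (max_lt (lt_max_of_lt_left hδ') h2ε')

theorem stmt2 {X : Type*} [MetricSpace X] [CompactSpace X] [MeasurableSpace X] [BorelSpace X] (Φ : ℝ → X → X) (hΦ : IsFlow Φ) (x y : X)
    (t δ ε : ℝ) (ht : 1 < t) (hδ : 0 < δ)
    (h : fkGap Φ t δ x y < ε) :
    prokhorov (empMeasure Φ x t) (empMeasure Φ y t) < max δ (2 * ε) :=
  stmt2_general Φ hΦ x y t δ ε ht h
end

section
/- The Feldman-Katok pseudodistance f̃_δ for a flow is invariant along orbits: if z is in the orbit of x (i.e., z = φ^r(x) for some r ∈ ℝ), then f̃_δ(z,y) = f̃_δ(x,y) for every y ∈ X and δ > 0. -/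
open MeasureTheory Filter Set Topology
open scoped ENNReal symmDiff

/-!
A `(t, ε, δ)`-matching of `x` with `y` becomes one of `φ^r x` with `y` (for `r ≥ 0`) after
dropping the times before `r` and translating by `-r`; this loses at most `r` of the domain and
`(1 + ε) r` of the image, so the error grows by `O(r / t)`. Conversely, translating a matching of
`φ^r x` on `[0, t - r]` by `r` gives a matching of `x` on `[0, t]` with error `ε + r / t`. Both
corrections vanish in the `limsup` as `t → ∞`.
-/

lemma MeasurableSet.of_forall_le_mem {α : Type*} [LinearOrder α] [TopologicalSpace α]
    [OrderClosedTopology α] [MeasurableSpace α] [OpensMeasurableSpace α]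
    [SecondCountableTopology α] {A S : Set α} (hA : MeasurableSet A) (hSA : S ⊆ A)
    (hS : ∀ a ∈ S, ∀ b ∈ A, a ≤ b → b ∈ S) : MeasurableSet S := by
  have hS_eq : S = A ∩ upperClosure S := by
    refine Subset.antisymm (fun a ha => ⟨hSA ha, subset_upperClosure ha⟩) ?_
    rintro b ⟨hbA, a, haS, hab⟩
    exact hS a haS b hbA hab
  rw [hS_eq]
  exact hA.inter (upperClosure S).upper.ordConnected.measurableSet

lemma ENNReal.ofReal_sub_lt_of_lt_add {a b c : ℝ} {x : ℝ≥0∞}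
    (h : ENNReal.ofReal a < x + ENNReal.ofReal b) (hb : 0 ≤ b) (hbc : b ≤ c) (hca : c ≤ a) :
    ENNReal.ofReal (a - c) < x := by
  have hsplit : ENNReal.ofReal a = ENNReal.ofReal (a - c) + ENNReal.ofReal c := by
    rw [← ENNReal.ofReal_add (by linarith) (by linarith), sub_add_cancel]
  have hle : x + ENNReal.ofReal b ≤ x + ENNReal.ofReal c := by gcongr
  rw [hsplit] at h
  exact (ENNReal.add_lt_add_iff_right ENNReal.ofReal_ne_top).mp (h.trans_le hle)

lemma Filter.limsup_le_limsup_of_le_add_of_tendsto_zero {ι : Type*} {l : Filter ι} [l.NeBot]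
    {u v w : ι → ℝ} (hu : IsCoboundedUnder (· ≤ ·) l u) (hv_le : IsBoundedUnder (· ≤ ·) l v)
    (hv_ge : IsBoundedUnder (· ≥ ·) l v) (hw : Tendsto w l (𝓝 0))
    (h : ∀ᶠ i in l, u i ≤ v i + w i) : limsup u l ≤ limsup v l :=
  calc limsup u l ≤ limsup (v + w) l :=
        limsup_le_limsup h hu (isBoundedUnder_le_add hv_le hw.isBoundedUnder_le)
    _ ≤ limsup v l + limsup w l :=
        limsup_add_le hv_ge hv_le hw.isCoboundedUnder_le hw.isBoundedUnder_le
    _ = limsup v l := by rw [hw.limsup_eq, add_zero]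

lemma IsFlow.apply_neg_apply {X : Type*} [TopologicalSpace X] {Φ : ℝ → X → X} (hΦ : IsFlow Φ)
    (r : ℝ) (x : X) : Φ (-r) (Φ r x) = x := by
  rw [← hΦ.map_add, add_neg_cancel, hΦ.map_zero]

section Matching

variable {X : Type*} [MetricSpace X] {Φ : ℝ → X → X} {x y : X} {t ε δ r : ℝ}

structure IsMatching (Φ : ℝ → X → X) (x y : X) (ε δ : ℝ) (A A' : Set ℝ) (h h' : ℝ → ℝ) :
    Prop where
  measurableSet_dom : MeasurableSet A
  measurableSet_codom : MeasurableSet A'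
  mapsTo : MapsTo h A A'
  surjOn : SurjOn h A A'
  strictMonoOn : StrictMonoOn h A
  volume_image : ∀ B ⊆ A, MeasurableSet B → volume (h '' B) = ENNReal.ofReal (∫ s in B, h' s)
  abs_deriv_sub_one_lt : ∀ s ∈ A, |h' s - 1| < ε
  dist_lt : ∀ s ∈ A, dist (Φ s x) (Φ (h s) y) < δ

lemma matchable_iff : Matchable Φ x y t ε δ ↔ ∃ (A A' : Set ℝ) (h h' : ℝ → ℝ),
    IsMatching Φ x y ε δ A A' h h' ∧ A ⊆ Icc 0 t ∧ A' ⊆ Icc 0 t ∧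
      ENNReal.ofReal ((1 - ε) * t) < volume A ∧ ENNReal.ofReal ((1 - ε) * t) < volume A' := by
  constructor
  · rintro ⟨A, A', h, h', hA, hA', hAt, hA't, hvA, hvA', hmaps, hsurj, hmono, hvol, hder, hdist⟩
    exact ⟨A, A', h, h', ⟨hA, hA', hmaps, hsurj, hmono, hvol, hder, hdist⟩, hAt, hA't, hvA, hvA'⟩
  · rintro ⟨A, A', h, h', ⟨hA, hA', hmaps, hsurj, hmono, hvol, hder, hdist⟩, hAt, hA't, hvA, hvA'⟩
    exact ⟨A, A', h, h', hA, hA', hAt, hA't, hvA, hvA', hmaps, hsurj, hmono, hvol, hder, hdist⟩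

namespace IsMatching

variable {A A' : Set ℝ} {h h' : ℝ → ℝ}

lemma mono {ε' : ℝ} (hM : IsMatching Φ x y ε δ A A' h h') (hε : ε ≤ ε') :
    IsMatching Φ x y ε' δ A A' h h' :=
  { hM with abs_deriv_sub_one_lt := fun s hs => (hM.abs_deriv_sub_one_lt s hs).trans_le hε }

lemma image_eq (hM : IsMatching Φ x y ε δ A A' h h') : h '' A = A' :=
  hM.mapsTo.image_subset.antisymm hM.surjOn

lemma volume_image_le (hM : IsMatching Φ x y ε δ A A' h h') {B : Set ℝ} (hBA : B ⊆ A)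
    (hB : MeasurableSet B) (hB_fin : volume B < ∞) :
    volume (h '' B) ≤ ENNReal.ofReal ((1 + ε) * volume.real B) := by
  have hbound : ∀ s ∈ B, ‖h' s‖ ≤ 1 + ε := fun s hs => by
    have := hM.abs_deriv_sub_one_lt s (hBA hs)
    rw [Real.norm_eq_abs]
    linarith [abs_sub_abs_le_abs_sub (h' s) 1, abs_one (α := ℝ)]
  rw [hM.volume_image B hBA hB]
  exact ENNReal.ofReal_le_ofReal
    ((le_abs_self _).trans (norm_setIntegral_le_of_norm_le_const hB_fin hbound))

lemma comp_add_right (hΦ : IsFlow Φ) (hM : IsMatching Φ x y ε δ A A' h h') (r : ℝ) :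
    IsMatching Φ (Φ r x) y ε δ ((· + r) ⁻¹' A) A' (fun s => h (s + r)) (fun s => h' (s + r)) where
  measurableSet_dom := hM.measurableSet_dom.preimage (measurable_add_const r)
  measurableSet_codom := hM.measurableSet_codom
  mapsTo _ hs := hM.mapsTo hs
  surjOn a ha := by
    obtain ⟨s, hs, rfl⟩ := hM.surjOn ha
    exact ⟨s - r, by simpa using hs, by simp⟩
  strictMonoOn _ hs _ hs' hlt := hM.strictMonoOn hs hs' (add_lt_add_left hlt r)
  volume_image B hBA hB := by
    have hemb := measurableEmbedding_addRight r
    rw [← image_image h (· + r), hM.volume_image _ (image_subset_iff.mpr hBA)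
      (hemb.measurableSet_image.mpr hB),
      (measurePreserving_add_right volume r).setIntegral_image_emb hemb]
  abs_deriv_sub_one_lt s hs := hM.abs_deriv_sub_one_lt (s + r) hs
  dist_lt s hs := by
    rw [← hΦ.map_add, add_comm]
    exact hM.dist_lt (s + r) hs

lemma restrict_Ici (hM : IsMatching Φ x y ε δ A A' h h') (r : ℝ) :
    IsMatching Φ x y ε δ (A ∩ Ici r) (h '' (A ∩ Ici r)) h h' where
  measurableSet_dom := hM.measurableSet_dom.inter measurableSet_Ici
  measurableSet_codom := by
    refine hM.measurableSet_codom.of_forall_le_mem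
      (hM.mapsTo.mono_left inter_subset_left).image_subset ?_
    rintro _ ⟨s, ⟨hsA, hrs⟩, rfl⟩ b hb hsb
    obtain ⟨s', hs'A, rfl⟩ := hM.surjOn hb
    refine ⟨s', ⟨hs'A, mem_Ici.mpr (le_of_not_gt fun hs'r => ?_)⟩, rfl⟩
    exact (hM.strictMonoOn hs'A hsA (hs'r.trans_le hrs)).not_ge hsb
  mapsTo := mapsTo_image h _
  surjOn := surjOn_image h _
  strictMonoOn := hM.strictMonoOn.mono inter_subset_left
  volume_image B hB := hM.volume_image B (hB.trans inter_subset_left)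
  abs_deriv_sub_one_lt s hs := hM.abs_deriv_sub_one_lt s hs.1
  dist_lt s hs := hM.dist_lt s hs.1

end IsMatching

lemma Matchable.mono {ε' : ℝ} (ht : 0 ≤ t) (hε : ε ≤ ε') (hM : Matchable Φ x y t ε δ) :
    Matchable Φ x y t ε' δ := by
  obtain ⟨A, A', h, h', hM, hAt, hA't, hvA, hvA'⟩ := matchable_iff.mp hM
  have hvol : ENNReal.ofReal ((1 - ε') * t) ≤ ENNReal.ofReal ((1 - ε) * t) := by gcongr
  exact matchable_iff.mpr ⟨A, A', h, h', hM.mono hε, hAt, hA't, hvol.trans_lt hvA,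
    hvol.trans_lt hvA'⟩

/-- The times before `r` are discarded; their image under `h` has measure at most `2 r`
because `h' < 1 + ε ≤ 2`. -/
lemma Matchable.flow_apply (hΦ : IsFlow Φ) (hr : 0 ≤ r) (ht : 0 < t)
    (hε : ε + 2 * r / t ≤ 1) (hM : Matchable Φ x y t ε δ) :
    Matchable Φ (Φ r x) y t (ε + 2 * r / t) δ := by
  obtain ⟨A, A', h, h', hM, hAt, hA't, hvA, hvA'⟩ := matchable_iff.mp hM
  have hε_eq : (1 - (ε + 2 * r / t)) * t = (1 - ε) * t - 2 * r := by field_simp; ring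
  have h2r : 2 * r ≤ (1 - ε) * t := by
    have : 2 * r / t * t = 2 * r := div_mul_cancel₀ _ ht.ne'
    nlinarith
  set D := A ∩ Iio r
  have hDr : D ⊆ Ico 0 r := fun s hs => ⟨(hAt hs.1).1, hs.2⟩
  have hvD : volume D ≤ ENNReal.ofReal r := by
    simpa [Real.volume_Ico] using measure_mono (μ := volume) hDr
  have hvD_real : volume.real D ≤ r := by
    rw [measureReal_def]
    exact ENNReal.toReal_le_of_le_ofReal hr hvD
  have hAD : A ⊆ (A ∩ Ici r) ∪ D := fun s hs => by
    rcases le_or_gt r s with hrs | hsr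
    exacts [Or.inl ⟨hs, hrs⟩, Or.inr ⟨hs, hsr⟩]
  have hvhD : volume (h '' D) ≤ ENNReal.ofReal (2 * r) := by
    refine (hM.volume_image_le inter_subset_left (hM.measurableSet_dom.inter measurableSet_Iio)
      (hvD.trans_lt ENNReal.ofReal_lt_top)).trans (ENNReal.ofReal_le_ofReal ?_)
    have hε1 : ε ≤ 1 := by linarith [show 0 ≤ 2 * r / t by positivity]
    nlinarith [measureReal_nonneg (μ := volume) (s := D)]
  refine matchable_iff.mpr ⟨_, _, _, _, ((hM.restrict_Ici r).comp_add_right hΦ r).mono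
    (le_add_of_nonneg_right (by positivity)), ?_, ?_, ?_, ?_⟩
  · rintro s ⟨hsA, hrs⟩
    have := hAt hsA
    constructor <;> linarith [this.1, this.2, mem_Ici.mp hrs]
  · exact (image_mono inter_subset_left).trans (hM.image_eq ▸ hA't)
  · rw [measure_preimage_add_right, hε_eq]
    refine ENNReal.ofReal_sub_lt_of_lt_add (b := r) ?_ hr (by linarith) h2r
    exact hvA.trans_le ((measure_mono hAD).trans ((measure_union_le _ _).trans (by gcongr)))
  · rw [hε_eq]
    refine ENNReal.ofReal_sub_lt_of_lt_add (b := 2 * r) ?_ (by positivity) le_rfl h2r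
    calc ENNReal.ofReal ((1 - ε) * t) < volume A' := hvA'
      _ ≤ volume (h '' (A ∩ Ici r)) + volume (h '' D) := by
        rw [← hM.image_eq]
        exact (measure_mono (image_mono hAD |>.trans (image_union _ _ _).subset)).trans
          (measure_union_le _ _)
      _ ≤ _ := by gcongr

lemma Matchable.of_flow_apply (hΦ : IsFlow Φ) (hr : 0 ≤ r) (ht : 0 < t) (hε : 0 ≤ ε)
    (hM : Matchable Φ (Φ r x) y (t - r) ε δ) : Matchable Φ x y t (ε + r / t) δ := by
  obtain ⟨A, A', h, h', hM, hAt, hA't, hvA, hvA'⟩ := matchable_iff.mp hM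
  have hvol : ENNReal.ofReal ((1 - (ε + r / t)) * t) ≤ ENNReal.ofReal ((1 - ε) * (t - r)) := by
    refine ENNReal.ofReal_le_ofReal ?_
    have : (1 - (ε + r / t)) * t = (1 - ε) * t - r := by field_simp; ring
    nlinarith
  have hM' := (hM.comp_add_right hΦ (-r)).mono
    (le_add_of_nonneg_right (by positivity : 0 ≤ r / t))
  rw [hΦ.apply_neg_apply] at hM'
  refine matchable_iff.mpr ⟨_, _, _, _, hM', ?_, ?_, ?_, ?_⟩
  · intro s hs
    have := hAt hs
    constructor <;> linarith [this.1, this.2]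
  · intro s hs
    have := hA't hs
    constructor <;> linarith [this.1, this.2]
  · rw [measure_preimage_add_right]
    exact hvol.trans_lt hvA
  · exact hvol.trans_lt hvA'

end Matching

section Gap

variable {X : Type*} [MetricSpace X] {Φ : ℝ → X → X} {x y : X} {t ε δ r : ℝ}

lemma fkGap_nonneg (Φ : ℝ → X → X) (t δ : ℝ) (x y : X) : 0 ≤ fkGap Φ t δ x y :=
  Real.sInf_nonneg fun _ ha => ha.elim (fun ha => ha.1.le) fun ha => ha.symm ▸ zero_le_one

lemma fkGap_bddBelow (Φ : ℝ → X → X) (t δ : ℝ) (x y : X) :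
    BddBelow ({ε : ℝ | 0 < ε ∧ Matchable Φ x y t ε δ} ∪ {1}) :=
  ⟨0, fun _ ha => ha.elim (fun ha => ha.1.le) fun ha => ha.symm ▸ zero_le_one⟩

lemma fkGap_le_one (Φ : ℝ → X → X) (t δ : ℝ) (x y : X) : fkGap Φ t δ x y ≤ 1 :=
  csInf_le (fkGap_bddBelow Φ t δ x y) (mem_union_right _ rfl)

lemma fkGap_le_of_matchable (hε : 0 < ε) (hM : Matchable Φ x y t ε δ) : fkGap Φ t δ x y ≤ ε :=
  csInf_le (fkGap_bddBelow Φ t δ x y) (mem_union_left _ ⟨hε, hM⟩)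

lemma matchable_of_fkGap_lt (ht : 0 ≤ t) (hlt : fkGap Φ t δ x y < ε) (hε : ε ≤ 1) :
    Matchable Φ x y t ε δ := by
  obtain ⟨a, ha, hlt⟩ := exists_lt_of_csInf_lt ⟨1, mem_union_right _ (mem_singleton 1)⟩ hlt
  rcases ha with ⟨-, hM⟩ | rfl
  exacts [hM.mono ht hlt.le, absurd hε hlt.not_ge]

lemma fkGap_le_add {x' y' : X} {t' c : ℝ} (ht : 0 ≤ t) (hc : 0 ≤ c)
    (H : ∀ ε, 0 < ε → ε + c ≤ 1 → Matchable Φ x y t ε δ → Matchable Φ x' y' t' (ε + c) δ) :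
    fkGap Φ t' δ x' y' ≤ fkGap Φ t δ x y + c := by
  rw [← sub_le_iff_le_add]
  refine le_of_forall_gt_imp_ge_of_dense fun ε hε => ?_
  rw [sub_le_iff_le_add]
  rcases le_or_gt (ε + c) 1 with hεc | hεc
  · have hε0 := (fkGap_nonneg Φ t δ x y).trans_lt hε
    exact fkGap_le_of_matchable (by positivity)
      (H ε hε0 hεc (matchable_of_fkGap_lt ht hε (by linarith)))
  · exact (fkGap_le_one Φ t' δ x' y').trans hεc.le

lemma fkGap_flow_apply_le (hΦ : IsFlow Φ) (hr : 0 ≤ r) (ht : 0 < t) :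
    fkGap Φ t δ (Φ r x) y ≤ fkGap Φ t δ x y + 2 * r / t :=
  fkGap_le_add ht.le (by positivity) fun _ _ hε hM => hM.flow_apply hΦ hr ht hε

lemma fkGap_le_flow_apply (hΦ : IsFlow Φ) (hr : 0 ≤ r) (hrt : r ≤ t) (ht : 0 < t) :
    fkGap Φ t δ x y ≤ fkGap Φ (t - r) δ (Φ r x) y + r / t :=
  fkGap_le_add (sub_nonneg.mpr hrt) (by positivity) fun _ hε _ hM =>
    hM.of_flow_apply hΦ hr ht hε.le

lemma isBoundedUnder_le_fkGap (Φ : ℝ → X → X) (δ : ℝ) (x y : X) {ι : Type*} {l : Filter ι}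
    {f : ι → ℝ} :
    IsBoundedUnder (· ≤ ·) l fun t => fkGap Φ (f t) δ x y :=
  isBoundedUnder_of ⟨1, fun t => fkGap_le_one Φ (f t) δ x y⟩

lemma isBoundedUnder_ge_fkGap (Φ : ℝ → X → X) (δ : ℝ) (x y : X) {ι : Type*} {l : Filter ι}
    {f : ι → ℝ} :
    IsBoundedUnder (· ≥ ·) l fun t => fkGap Φ (f t) δ x y :=
  isBoundedUnder_of ⟨0, fun t => fkGap_nonneg Φ (f t) δ x y⟩

lemma fkDist_flow_apply (hΦ : IsFlow Φ) (hr : 0 ≤ r) (x y : X) (δ : ℝ) :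
    fkDist Φ δ (Φ r x) y = fkDist Φ δ x y := by
  have hlim : ∀ c : ℝ, Tendsto (fun t => c / t) atTop (𝓝 0) := fun c =>
    tendsto_const_nhds.div_atTop tendsto_id
  refine le_antisymm ?_ ?_
  · refine limsup_le_limsup_of_le_add_of_tendsto_zero
      (isBoundedUnder_ge_fkGap Φ δ _ y (f := id)).isCoboundedUnder_le
      (isBoundedUnder_le_fkGap Φ δ x y (f := id)) (isBoundedUnder_ge_fkGap Φ δ x y (f := id))
      (hlim (2 * r)) ?_
    filter_upwards [eventually_gt_atTop 0] with t ht
    exact fkGap_flow_apply_le hΦ hr ht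
  · have hshift : fkDist Φ δ (Φ r x) y = limsup (fun t => fkGap Φ (t - r) δ (Φ r x) y) atTop :=
      (congrArg _ (map_sub_atTop_eq r)).symm
    rw [hshift]
    refine limsup_le_limsup_of_le_add_of_tendsto_zero
      (isBoundedUnder_ge_fkGap Φ δ x y (f := id)).isCoboundedUnder_le
      (isBoundedUnder_le_fkGap Φ δ _ y) (isBoundedUnder_ge_fkGap Φ δ _ y) (hlim r) ?_
    filter_upwards [eventually_gt_atTop 0, eventually_ge_atTop r] with t ht hrt
    exact fkGap_le_flow_apply hΦ hr hrt ht

end Gap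

theorem stmt3_general {X : Type*} [MetricSpace X] (Φ : ℝ → X → X) (hΦ : IsFlow Φ) (x z : X)
    (r : ℝ) (hz : z = Φ r x) :
    ∀ (y : X) (δ : ℝ), 0 < δ → fkDist Φ δ z y = fkDist Φ δ x y := by
  intro y δ _
  subst hz
  rcases le_total 0 r with hr | hr
  · exact fkDist_flow_apply hΦ hr x y δ
  · have h := fkDist_flow_apply hΦ (neg_nonneg.mpr hr) (Φ r x) y δ
    rw [hΦ.apply_neg_apply] at h
    exact h.symm

theorem stmt3 {X : Type*} [MetricSpace X] [CompactSpace X] (Φ : ℝ → X → X) (hΦ : IsFlow Φ) (x z : X)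
    (r : ℝ) (hz : z = Φ r x) :
    ∀ (y : X) (δ : ℝ), 0 < δ → fkDist Φ δ z y = fkDist Φ δ x y :=
  stmt3_general Φ hΦ x z r hz
end

section
/- For any Borel probability measure μ on a compact metric space X and any ε > 0, the set of ε-essentially open partitions is dense in the space of finite Borel partitions of X with respect to the partition pseudometric d_μ. -/
open MeasureTheory Filter Set Topology
open scoped ENNReal symmDiff

/-- A partition is `ε`-essentially open w.r.t. the basis `𝒰`: at most one (nonempty) cell
is not in `𝒰`, and such a cell has measure less than `ε`. -/
def EssOpen {X : Type*} [MeasurableSpace X] (μ : Measure X)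
    (𝒰 : Set (Set X)) (ε : ℝ) (Q : BPartition X) : Prop :=
  {j | Q.cells j ≠ ∅ ∧ Q.cells j ∉ 𝒰}.Subsingleton ∧
  ∀ j, Q.cells j ≠ ∅ → Q.cells j ∉ 𝒰 → (μ (Q.cells j)).toReal < ε

private lemma finsetUnion_mem_basis {X : Type*} {𝒰 : Set (Set X)}
    (hcl : ∀ U ∈ 𝒰, ∀ V ∈ 𝒰, U ∪ V ∈ 𝒰) {α : Type*} {t : Finset α} (ht : t.Nonempty)
    (f : α → Set X) (hf : ∀ a ∈ t, f a ∈ 𝒰) : (⋃ a ∈ t, f a) ∈ 𝒰 := by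
  induction ht using Finset.Nonempty.cons_induction with
  | singleton a => simpa using hf a (by simp)
  | cons a s ha hs ih =>
      have : (⋃ b ∈ Finset.cons a s ha, f b) = f a ∪ ⋃ b ∈ s, f b := by
        ext x; simp [Finset.mem_cons, or_and_right, exists_or]
      rw [this]
      exact hcl _ (hf a (by simp)) _ (ih fun b hb => hf b (by simp [hb]))

private lemma exists_basis_cover {X : Type*} [TopologicalSpace X] {𝒰 : Set (Set X)}
    (hb : TopologicalSpace.IsTopologicalBasis 𝒰)
    (hcl : ∀ U ∈ 𝒰, ∀ V ∈ 𝒰, U ∪ V ∈ 𝒰) {K W : Set X} (hK : IsCompact K)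
    (hKne : K.Nonempty) (hW : IsOpen W) (hKW : K ⊆ W) :
    ∃ V ∈ 𝒰, K ⊆ V ∧ V ⊆ W := by
  have h : ∀ x : X, ∃ U : Set X, x ∈ K → U ∈ 𝒰 ∧ x ∈ U ∧ U ⊆ W := by
    intro x
    by_cases hx : x ∈ K
    · obtain ⟨U, hU, hxU, hUW⟩ := hb.exists_subset_of_mem_open (hKW hx) hW
      exact ⟨U, fun _ => ⟨hU, hxU, hUW⟩⟩
    · exact ⟨∅, fun h => absurd h hx⟩
  choose U hU using h
  obtain ⟨t, htK, hcov⟩ := hK.elim_nhds_subcover U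
    (fun x hx => (hb.isOpen (hU x hx).1).mem_nhds (hU x hx).2.1)
  have htne : t.Nonempty := by
    rcases hKne with ⟨x, hx⟩
    rcases mem_iUnion₂.1 (hcov hx) with ⟨y, hy, -⟩
    exact ⟨y, hy⟩
  refine ⟨⋃ x ∈ t, U x, finsetUnion_mem_basis hcl htne U (fun a ha => (hU a (htK a ha)).1), hcov, ?_⟩
  exact iUnion₂_subset fun x hx => (hU x (htK x hx)).2.2

theorem stmt7 {X : Type*} [MetricSpace X] [CompactSpace X] [MeasurableSpace X] [BorelSpace X] (𝒰 : Set (Set X))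
    (hb : TopologicalSpace.IsTopologicalBasis 𝒰) (hc : 𝒰.Countable)
    (hcl : ∀ U ∈ 𝒰, ∀ V ∈ 𝒰, U ∪ V ∈ 𝒰 ∧ U ∩ V ∈ 𝒰)
    (μ : Measure X) [IsProbabilityMeasure μ] (ε : ℝ) (hε : 0 < ε) :
    ∀ P : BPartition X, ∀ δ : ℝ, 0 < δ → ∃ Q : BPartition X,
      EssOpen μ 𝒰 ε Q ∧ dPart μ P.cells Q.cells < δ := by
  have hcl' : ∀ U ∈ 𝒰, ∀ V ∈ 𝒰, U ∪ V ∈ 𝒰 := fun U hU V hV => (hcl U hU V hV).1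
  intro P δ hδ
  obtain ⟨n, hn⟩ := P.finite
  have hmin : (0:ℝ) < min ε δ := lt_min hε hδ
  set η : ℝ := min ε δ / (2 * (n + 1)) with hη_def
  have hη : 0 < η := by positivity
  have hnη : (n : ℝ) * η < min ε δ := by
    have hkey : η * (2 * ((n:ℝ) + 1)) = min ε δ := by
      rw [hη_def]; field_simp
    calc (n:ℝ) * η < η * (2 * ((n:ℝ) + 1)) := by nlinarith
      _ = min ε δ := hkey
  -- compact approximations of the cells
  have hKex : ∀ j, ∃ K, K ⊆ P.cells j ∧ IsCompact K ∧ μ (P.cells j \ K) < ENNReal.ofReal η :=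
    fun j => (P.measurable j).exists_isCompact_diff_lt (measure_ne_top μ _)
      (ENNReal.ofReal_pos.2 hη).ne'
  choose K hKsub hKcomp hKlt using hKex
  have hKdisj : ∀ i j, i ≠ j → Disjoint (K i) (K j) :=
    fun i j hij => ((P.disj hij).mono (hKsub i) (hKsub j))
  -- uniform thickening radius
  have hpair : ∀ p : ℕ × ℕ, ∃ r, 0 < r ∧ (p.1 ≠ p.2 →
      Disjoint (Metric.thickening r (K p.1)) (Metric.thickening r (K p.2))) := by
    intro p
    by_cases h : p.1 = p.2
    · exact ⟨1, one_pos, fun h' => absurd h h'⟩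
    · obtain ⟨r, hr, hd⟩ := (hKdisj _ _ h).exists_thickenings (hKcomp _) (hKcomp _).isClosed
      exact ⟨r, hr, fun _ => hd⟩
  choose r hrpos hrdisj using hpair
  obtain ⟨c, hc0, hcle⟩ : ∃ c, 0 < c ∧ ∀ p ∈ Finset.range n ×ˢ Finset.range n, c ≤ r p := by
    rcases (Finset.range n ×ˢ Finset.range n).eq_empty_or_nonempty with h | h
    · exact ⟨1, one_pos, by simp [h]⟩
    · exact ⟨_, (Finset.lt_inf'_iff h).2 fun p _ => hrpos p, fun p hp => Finset.inf'_le _ hp⟩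
  -- basis neighborhoods
  have hVex : ∀ j, ∃ V : Set X, (j < n ∧ (K j).Nonempty) →
      V ∈ 𝒰 ∧ K j ⊆ V ∧ V ⊆ Metric.thickening c (K j) := by
    intro j
    by_cases h : j < n ∧ (K j).Nonempty
    · obtain ⟨V, hV, h1, h2⟩ := exists_basis_cover hb hcl' (hKcomp j) h.2
        Metric.isOpen_thickening (Metric.self_subset_thickening hc0 _)
      exact ⟨V, fun _ => ⟨hV, h1, h2⟩⟩
    · exact ⟨∅, fun h' => absurd h' h⟩
  choose V hV using hVex
  classical
  let G : ℕ → Set X := fun j => if j < n ∧ (K j).Nonempty then V j else ∅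
  have hGpos : ∀ j, j < n → (K j).Nonempty → G j = V j := by
    intro j h1 h2; simp only [G, if_pos (And.intro h1 h2)]
  have hGneg : ∀ j, ¬(j < n ∧ (K j).Nonempty) → G j = ∅ := by
    intro j h; simp only [G, if_neg h]
  have hGopen : ∀ j, IsOpen (G j) := by
    intro j
    by_cases h : j < n ∧ (K j).Nonempty
    · rw [hGpos j h.1 h.2]; exact hb.isOpen (hV j h).1
    · rw [hGneg j h]; exact isOpen_empty
  have hGthick : ∀ j, G j ⊆ Metric.thickening c (K j) := by
    intro j
    by_cases h : j < n ∧ (K j).Nonempty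
    · rw [hGpos j h.1 h.2]; exact (hV j h).2.2
    · rw [hGneg j h]; exact empty_subset _
  have hGdisj : ∀ i j, i ≠ j → Disjoint (G i) (G j) := by
    intro i j hij
    by_cases hi : i < n ∧ (K i).Nonempty
    · by_cases hj : j < n ∧ (K j).Nonempty
      · refine Disjoint.mono (hGthick i) (hGthick j) ?_
        refine Disjoint.mono (Metric.thickening_mono (hcle (i, j) ?_) _)
          (Metric.thickening_mono (hcle (i, j) ?_) _) (hrdisj (i, j) hij) <;>
          simp [Finset.mem_product, hi.1, hj.1]
      · rw [hGneg j hj]; exact disjoint_empty _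
    · rw [hGneg i hi]; exact empty_disjoint _
  let R : Set X := (⋃ i, G i)ᶜ
  let Qc : ℕ → Set X := fun j => if j < n then G j else if j = n then R else ∅
  have hQlt : ∀ j, j < n → Qc j = G j := by intro j h; simp only [Qc, if_pos h]
  have hQn : Qc n = R := by simp [Qc]
  have hQgt : ∀ j, ¬ j < n → j ≠ n → Qc j = ∅ := by
    intro j h1 h2; simp only [Qc, if_neg h1, if_neg h2]
  have hQmeas : ∀ j, MeasurableSet (Qc j) := by
    intro j
    by_cases h : j < n
    · rw [hQlt j h]; exact (hGopen j).measurableSet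
    · by_cases h' : j = n
      · rw [h', hQn]
        exact (MeasurableSet.iUnion fun i => (hGopen i).measurableSet).compl
      · rw [hQgt j h h']; exact MeasurableSet.empty
  have hQdisj : Pairwise (Function.onFun Disjoint Qc) := by
    intro i j hij
    unfold Function.onFun
    by_cases hi : i < n
    · rw [hQlt i hi]
      by_cases hj : j < n
      · rw [hQlt j hj]; exact hGdisj i j hij
      · by_cases hj' : j = n
        · rw [hj', hQn]
          exact disjoint_compl_right.mono_left (subset_iUnion G i)
        · rw [hQgt j hj hj']; exact disjoint_empty _
    · by_cases hi' : i = n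
      · rw [hi', hQn]
        by_cases hj : j < n
        · rw [hQlt j hj]
          exact disjoint_compl_left.mono_right (subset_iUnion G j)
        · by_cases hj' : j = n
          · exact absurd (hi'.trans hj'.symm) hij
          · rw [hQgt j hj hj']; exact disjoint_empty _
      · rw [hQgt i hi hi']; exact empty_disjoint _
  have hQcover : ⋃ j, Qc j = Set.univ := by
    apply eq_univ_of_forall
    intro x
    by_cases hx : x ∈ ⋃ i, G i
    · rcases mem_iUnion.1 hx with ⟨i, hi⟩
      have hin : i < n := by
        by_contra h
        rw [hGneg i (fun hc : i < n ∧ _ => h hc.1)] at hi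
        exact hi
      exact mem_iUnion.2 ⟨i, (hQlt i hin).symm ▸ hi⟩
    · exact mem_iUnion.2 ⟨n, hQn.symm ▸ hx⟩
  have hsum : μ (⋃ j ∈ Finset.range n, (P.cells j \ K j)) < ENNReal.ofReal (min ε δ) := by
    calc μ (⋃ j ∈ Finset.range n, (P.cells j \ K j))
        ≤ ∑ j ∈ Finset.range n, μ (P.cells j \ K j) := measure_biUnion_finset_le _ _
      _ ≤ ∑ _j ∈ Finset.range n, ENNReal.ofReal η :=
          Finset.sum_le_sum fun j _ => (hKlt j).le
      _ = (n : ℝ≥0∞) * ENNReal.ofReal η := by simp [mul_comm]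
      _ = ENNReal.ofReal ((n : ℝ) * η) := by
          rw [ENNReal.ofReal_mul (by positivity), ENNReal.ofReal_natCast]
      _ < ENNReal.ofReal (min ε δ) := (ENNReal.ofReal_lt_ofReal_iff hmin).2 hnη
  have keyn : ∀ m, Qc m ≠ ∅ → Qc m ∉ 𝒰 → m = n := by
    intro m h1 h2
    by_cases hm : m < n
    · exfalso
      by_cases hK' : (K m).Nonempty
      · exact h2 (by rw [hQlt m hm, hGpos m hm hK']; exact (hV m ⟨hm, hK'⟩).1)
      · exact h1 (by rw [hQlt m hm, hGneg m (fun h : m < n ∧ _ => hK' h.2)])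
    · by_cases hm' : m = n
      · exact hm'
      · exact absurd (hQgt m hm hm') h1
  refine ⟨⟨Qc, hQmeas, hQdisj, hQcover, ⟨n + 1, fun j hj =>
    hQgt j (by omega) (by omega)⟩⟩, ⟨?_, ?_⟩, ?_⟩
  · -- subsingleton
    intro i hi j hj
    simp only [Set.mem_setOf_eq] at hi hj
    rw [keyn i hi.1 hi.2, keyn j hj.1 hj.2]
  · -- measure of the exceptional cell
    intro j h1 h2
    have hj : j = n := keyn j h1 h2
    show (μ (Qc j)).toReal < ε
    rw [hj, hQn]
    have hRsub : R ⊆ ⋃ j ∈ Finset.range n, (P.cells j \ K j) := by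
      intro x hx
      have hxP : x ∈ ⋃ j, P.cells j := P.cover ▸ mem_univ x
      rcases mem_iUnion.1 hxP with ⟨j, hj⟩
      have hjn : j < n := by
        by_contra h
        rw [hn j (by omega)] at hj
        exact hj
      refine mem_iUnion₂.2 ⟨j, Finset.mem_range.2 hjn, hj, fun hK' => ?_⟩
      have hne : (K j).Nonempty := ⟨x, hK'⟩
      have : x ∈ G j := by
        rw [hGpos j hjn hne]
        exact (hV j ⟨hjn, hne⟩).2.1 hK'
      exact hx (mem_iUnion.2 ⟨j, this⟩)
    have hμR : μ R < ENNReal.ofReal (min ε δ) := (measure_mono hRsub).trans_lt hsum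
    exact (ENNReal.toReal_lt_of_lt_ofReal hμR).trans_le (min_le_left _ _)
  · -- distance bound
    have hbdd : BddBelow (Set.range fun σ : Equiv.Perm ℕ =>
        (μ (⋃ j, P.cells j \ Qc (σ j))).toReal) := by
      refine ⟨0, ?_⟩
      rintro x ⟨σ, rfl⟩
      exact ENNReal.toReal_nonneg
    have hle : dPart μ P.cells Qc ≤ (μ (⋃ j, P.cells j \ Qc j)).toReal :=
      ciInf_le hbdd (Equiv.refl ℕ)
    refine hle.trans_lt ?_
    have hsub : (⋃ j, P.cells j \ Qc j) ⊆ ⋃ j ∈ Finset.range n, (P.cells j \ K j) := by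
      intro x hx
      rcases mem_iUnion.1 hx with ⟨j, hxj, hxq⟩
      have hjn : j < n := by
        by_contra h
        rw [hn j (by omega)] at hxj
        exact hxj
      refine mem_iUnion₂.2 ⟨j, Finset.mem_range.2 hjn, hxj, fun hK' => ?_⟩
      have hne : (K j).Nonempty := ⟨x, hK'⟩
      refine hxq ?_
      rw [hQlt j hjn, hGpos j hjn hne]
      exact (hV j ⟨hjn, hne⟩).2.1 hK'
    have hμ : μ (⋃ j, P.cells j \ Qc j) < ENNReal.ofReal (min ε δ) :=
      (measure_mono hsub).trans_lt hsum
    exact (ENNReal.toReal_lt_of_lt_ofReal hμ).trans_le (min_le_right _ _)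
end

section
/- If a continuous flow Φ on a compact metric space X is transitive, then the time-t map φ^t is transitive for a dense G_δ set of t ∈ ℝ. -/
open MeasureTheory Filter Set Topology
open scoped ENNReal symmDiff

private lemma arith_pick (a b s : ℝ) (ha : 0 < a) (hab : a < b)
    (hs : a * b / (b - a) + b ≤ s) :
    ∃ n : ℕ, a < s / n ∧ s / n < b ∧ (n : ℝ) * (s / n) = s := by
  have hba : 0 < b - a := by linarith
  have hb : 0 < b := ha.trans hab
  have hs0 : 0 < s := by
    have h0 : 0 ≤ a * b / (b - a) := by positivity
    linarith
  refine ⟨⌊s / b⌋₊ + 1, ?_⟩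
  set n : ℕ := ⌊s / b⌋₊ + 1 with hn
  have hn0 : (0 : ℝ) < n := by
    have := Nat.succ_pos ⌊s / b⌋₊
    exact_mod_cast this
  have h1 : s / b < (n : ℝ) := by
    have := Nat.lt_floor_add_one (s / b)
    push_cast [hn]
    push_cast at this
    linarith
  have h2 : (n : ℝ) ≤ s / b + 1 := by
    have := Nat.floor_le (show (0:ℝ) ≤ s / b by positivity)
    push_cast [hn]
    linarith
  have h3 : s / b + 1 < s / a := by
    have hkey : a * (s + b) < s * b := by
      have h4 : (a * b / (b - a) + b) * (b - a) ≤ s * (b - a) :=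
        mul_le_mul_of_nonneg_right hs hba.le
      have h5 : a * b / (b - a) * (b - a) = a * b := div_mul_cancel₀ _ (ne_of_gt hba)
      nlinarith
    have heq : s / b + 1 = (s + b) / b := by field_simp
    rw [heq, div_lt_div_iff₀ hb ha]
    linarith
  have h4 : (n : ℝ) < s / a := lt_of_le_of_lt h2 h3
  refine ⟨?_, ?_, ?_⟩
  · rw [lt_div_iff₀ hn0, mul_comm]
    exact (lt_div_iff₀ ha).1 h4
  · rw [div_lt_iff₀ hn0, mul_comm]
    exact (div_lt_iff₀ hb).1 h1
  · rw [mul_comm]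
    exact div_mul_cancel₀ s (ne_of_gt hn0)


theorem stmt10 {X : Type*} [MetricSpace X] [CompactSpace X] (Φ : ℝ → X → X) (hΦ : IsFlow Φ)
    (htrans : ∃ x : X, Dense ((fun t : ℝ => Φ t x) '' Set.Ici (0:ℝ))) :
    ∃ G : Set ℝ, IsGδ G ∧ Dense G ∧
      ∀ t ∈ G, ∃ x : X, Dense (Set.range fun n : ℕ => (Φ t)^[n] x) := by
  obtain ⟨x₀, hx₀⟩ := htrans
  haveI : Nonempty X := ⟨x₀⟩
  -- continuity of time-c maps and of t ↦ Φ (c*t) y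
  have hcont : ∀ c : ℝ, Continuous (Φ c) := fun c =>
    hΦ.cont.comp (continuous_const.prodMk continuous_id)
  have hcontT : ∀ (c : ℝ) (y : X), Continuous fun t : ℝ => Φ (c * t) y := fun c y =>
    hΦ.cont.comp ((continuous_const.mul continuous_id).prodMk continuous_const)
  -- the dense forward orbit hits every nonempty open set
  have orbit_hit : ∀ W : Set X, IsOpen W → W.Nonempty → ∃ r : ℝ, 0 ≤ r ∧ Φ r x₀ ∈ W := by
    intro W hW hWne
    obtain ⟨y, hyW, hyim⟩ := hx₀.inter_open_nonempty W hW hWne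
    obtain ⟨r, hr, rfl⟩ := hyim
    exact ⟨r, hr, hyW⟩
  -- key unboundedness of hitting times between two open sets
  have key : ∀ U V : Set X, IsOpen U → U.Nonempty → IsOpen V → V.Nonempty →
      ∀ M : ℝ, ∃ s : ℝ, M ≤ s ∧ ∃ y ∈ V, Φ s y ∈ U := by
    intro U V hU hUne hV hVne M
    obtain ⟨r, hr0, hrV⟩ := orbit_hit V hV hVne
    set c : ℝ := max M 0 + r with hc
    have hWne : ((Φ c) ⁻¹' U).Nonempty := by
      obtain ⟨u, hu⟩ := hUne
      refine ⟨Φ (-c) u, ?_⟩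
      have : Φ (-c + c) u = Φ c (Φ (-c) u) := hΦ.map_add (-c) c u
      simp only [mem_preimage]
      rw [← this, neg_add_cancel, hΦ.map_zero]
      exact hu
    obtain ⟨p, hp0, hpW⟩ := orbit_hit _ ((hU.preimage (hcont c))) hWne
    refine ⟨p + c - r, by simp [hc]; linarith [le_max_left M 0], Φ r x₀, hrV, ?_⟩
    have h1 : Φ (r + (p + c - r)) x₀ = Φ (p + c - r) (Φ r x₀) := hΦ.map_add _ _ _
    have h2 : Φ (p + c) x₀ = Φ c (Φ p x₀) := hΦ.map_add _ _ _
    rw [← h1]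
    have : r + (p + c - r) = p + c := by ring
    rw [this, h2]
    exact hpW
  -- countable basis
  obtain ⟨b, hbc, hbne, hb⟩ := TopologicalSpace.exists_countable_basis X
  have hbNE : ∀ U ∈ b, U.Nonempty := fun U hU =>
    nonempty_iff_ne_empty.2 (fun h => hbne (h ▸ hU))
  -- the sets T U V
  set T : Set X → Set X → Set ℝ :=
    fun U V => {t : ℝ | ∃ n : ℕ, ∃ y ∈ V, Φ ((n : ℝ) * t) y ∈ U} with hT
  have hTopen : ∀ U V : Set X, IsOpen U → IsOpen (T U V) := by
    intro U V hU
    have : T U V = ⋃ n : ℕ, ⋃ y ∈ V, (fun t : ℝ => Φ ((n : ℝ) * t) y) ⁻¹' U := by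
      ext t; simp [hT]
    rw [this]
    exact isOpen_iUnion fun n => isOpen_biUnion fun y _ => hU.preimage (hcontT _ _)
  have hTdense : ∀ U V : Set X, IsOpen U → U.Nonempty → IsOpen V → V.Nonempty →
      Dense (T U V) := by
    intro U V hU hUne hV hVne
    rw [dense_iff_inter_open]
    rintro O hO ⟨x, hx⟩
    obtain ⟨ε, hε, hball⟩ := Metric.isOpen_iff.1 hO x hx
    rw [Real.ball_eq_Ioo] at hball
    rcases le_or_gt 0 x with hx0 | hx0
    · -- positive subinterval (x + ε/4, x + ε/2)
      set a : ℝ := x + ε / 4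
      set b' : ℝ := x + ε / 2
      have ha : 0 < a := by positivity
      have hab : a < b' := by simp only [a, b']; linarith
      obtain ⟨s, hsM, y, hyV, hyU⟩ := key U V hU hUne hV hVne (a * b' / (b' - a) + b')
      obtain ⟨n, h1, h2, h3⟩ := arith_pick a b' s ha hab hsM
      refine ⟨s / n, ?_, ⟨n, y, hyV, by rw [h3]; exact hyU⟩⟩
      simp only [a, b'] at h1 h2
      exact hball ⟨by linarith, by linarith⟩
    · -- negative subinterval (x - ε/2, x - ε/4); use swapped sets
      set a : ℝ := ε / 4 - x
      set b' : ℝ := ε / 2 - x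
      have ha : 0 < a := by simp only [a]; linarith
      have hab : a < b' := by simp only [a, b']; linarith
      obtain ⟨s, hsM, z, hzU, hzV⟩ := key V U hV hVne hU hUne (a * b' / (b' - a) + b')
      obtain ⟨n, h1, h2, h3⟩ := arith_pick a b' s ha hab hsM
      refine ⟨-(s / n), ?_, ⟨n, Φ s z, hzV, ?_⟩⟩
      · simp only [a, b'] at h1 h2
        exact hball ⟨by linarith, by linarith⟩
      · have hadd : Φ (s + -s) z = Φ (-s) (Φ s z) := hΦ.map_add s (-s) z
        have : (n : ℝ) * -(s / n) = -s := by rw [mul_neg, h3]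
        rw [this, ← hadd, add_neg_cancel, hΦ.map_zero]
        exact hzU
  -- the dense Gδ set
  refine ⟨⋂ p ∈ b ×ˢ b, T p.1 p.2, ?_, ?_, ?_⟩
  · exact IsGδ.biInter_of_isOpen (hbc.prod hbc)
      (fun p hp => hTopen _ _ (hb.isOpen (mem_prod.1 hp).1))
  · exact dense_biInter_of_isOpen
      (fun p hp => hTopen _ _ (hb.isOpen (mem_prod.1 hp).1)) (hbc.prod hbc)
      (fun p hp => hTdense _ _ (hb.isOpen (mem_prod.1 hp).1) (hbNE _ (mem_prod.1 hp).1)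
        (hb.isOpen (mem_prod.1 hp).2) (hbNE _ (mem_prod.1 hp).2))
  · intro t ht
    simp only [mem_iInter] at ht
    -- the dense open sets in X
    set D : Set X → Set X := fun U => ⋃ n : ℕ, (fun z : X => Φ ((n : ℝ) * t) z) ⁻¹' U with hD
    have hDopen : ∀ U ∈ b, IsOpen (D U) :=
      fun U hU => isOpen_iUnion fun n => (hb.isOpen hU).preimage (hcont _)
    have hDdense : ∀ U ∈ b, Dense (D U) := by
      intro U hU
      rw [dense_iff_inter_open]
      rintro O hO ⟨y0, hy0⟩
      obtain ⟨V, hVb, hy0V, hVO⟩ := hb.exists_subset_of_mem_open hy0 hO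
      obtain ⟨n, y, hyV, hyU⟩ := ht (U, V) (mem_prod.2 ⟨hU, hVb⟩)
      exact ⟨y, hVO hyV, mem_iUnion.2 ⟨n, hyU⟩⟩
    have hSd : Dense (⋂ U ∈ b, D U) := dense_biInter_of_isOpen hDopen hbc hDdense
    obtain ⟨x, hx⟩ := hSd.nonempty
    simp only [mem_iInter] at hx
    refine ⟨x, ?_⟩
    have hiter : ∀ n : ℕ, (Φ t)^[n] x = Φ ((n : ℝ) * t) x := by
      intro n
      induction n with
      | zero => simp [hΦ.map_zero]
      | succ n ih =>
        rw [Function.iterate_succ_apply', ih, ← hΦ.map_add ((n : ℝ) * t) t x]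
        push_cast
        ring_nf
    rw [dense_iff_inter_open]
    rintro O hO ⟨y0, hy0⟩
    obtain ⟨V, hVb, hy0V, hVO⟩ := hb.exists_subset_of_mem_open hy0 hO
    obtain ⟨n, hn⟩ := mem_iUnion.1 (hx V hVb)
    exact ⟨(Φ t)^[n] x, by rw [hiter]; exact hVO hn, mem_range_self n⟩
end
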